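/- arXiv:1904.09125 — 2 statements merged into one kernel-verified Lean document; each statement's English description precedes it below -/
import Mathlib

section
/- For k ≥ 3 and a word w of length 2k over {a,b} with k occurrences of a and k occurrences of b, ScatFact_k(w) = Σ^k (all 2^k words of length k) if and only if w ∈ {ab, ba}^k. -/
/-
A word of length `2k` containing every word of length `k` as a subsequence starts with two
different letters: if it started with `cc`, the words `(¬c) c^(k-1)` and `(¬c)^k` would both have to
embed in the remaining `2k - 2` letters, forcing at least `2k - 1` of them. Deleting that first
block leaves a word of length `2(k-1)` that is still `(k-1)`-universal, since every `(¬c) v` embeds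
into the whole word. Conversely, each block `ab` or `ba` contains both letters, and universality
adds up under concatenation.
-/

def wa : Bool := false
def wb : Bool := true

/-- The set of scattered factors (subsequences) of `w` of length exactly `k`. -/
def ScatFact (k : ℕ) (w : List Bool) : Finset (List Bool) :=
  (w.sublists.filter (fun u => u.length = k)).toFinset

def AltBlocks (k : ℕ) (u : List Bool) : Prop :=
  ∃ blocks : List (List Bool), blocks.length = k ∧
    (∀ b ∈ blocks, b = [wa, wb] ∨ b = [wb, wa]) ∧ u = blocks.flatten

namespace List

variable {α : Type*}

def IsUniversal (k : ℕ) (w : List α) : Prop :=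
  ∀ v : List α, v.length = k → v <+ w

theorem IsUniversal.append {m n : ℕ} {u w : List α} (hu : u.IsUniversal m)
    (hw : w.IsUniversal n) : (u ++ w).IsUniversal (m + n) := by
  intro v hv
  rw [← take_append_drop m v]
  exact (hu _ (by simp [hv])).append (hw _ (by simp [hv]))

theorem isUniversal_zero (w : List α) : w.IsUniversal 0 := by
  intro v hv
  simp [length_eq_zero_iff.mp hv]

theorem isUniversal_flatten {bs : List (List α)} (h : ∀ b ∈ bs, b.IsUniversal 1) :
    bs.flatten.IsUniversal bs.length := by
  induction bs with
  | nil => exact isUniversal_zero _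
  | cons b bs ih =>
    rw [flatten_cons, length_cons, add_comm]
    exact (h b mem_cons_self).append (ih fun b' hb' => h b' (mem_cons_of_mem _ hb'))

theorem IsUniversal.ne_of_cons_cons {k : ℕ} {c d : Bool} {rest : List Bool}
    (hlen : rest.length = 2 * k) (h : (c :: d :: rest).IsUniversal (k + 1)) : c ≠ d := by
  rintro rfl
  have hne := Bool.not_ne_self c
  have embed : ∀ v, v.length = k → (!c) :: v <+ rest := fun v hv =>
    ((h _ (by simp [hv])).of_cons_of_ne hne).of_cons_of_ne hne
  have hc := (embed (replicate k c) length_replicate).count_le c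
  have hnc := (embed (replicate k (!c)) length_replicate).count_le (!c)
  have hsum := count_not_add_count rest c
  simp [hne] at hc hnc
  omega

theorem IsUniversal.of_cons_cons_not {k : ℕ} {c : Bool} {rest : List Bool}
    (h : (c :: (!c) :: rest).IsUniversal (k + 1)) : rest.IsUniversal k := fun v hv =>
  cons_sublist_cons.mp ((h _ (by simp [hv])).of_cons_of_ne (Bool.not_ne_self c))

end List

open List

theorem mem_scatFact {k : ℕ} {w v : List Bool} : v ∈ ScatFact k w ↔ v <+ w ∧ v.length = k := by
  simp [ScatFact]

theorem isUniversal_one_of_eq_alt {b : List Bool} (h : b = [wa, wb] ∨ b = [wb, wa]) :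
    b.IsUniversal 1 := by
  intro v hv
  obtain ⟨x, rfl⟩ := length_eq_one_iff.mp hv
  rcases h with rfl | rfl <;> cases x <;> decide

theorem altBlocks_of_isUniversal :
    ∀ {k : ℕ} {w : List Bool}, w.length = 2 * k → w.IsUniversal k → AltBlocks k w
  | 0, [], _, _ => ⟨[], rfl, by simp, rfl⟩
  | k + 1, c :: d :: rest, hlen, h => by
    have hrest : rest.length = 2 * k := by simp at hlen; omega
    obtain rfl : d = !c := Bool.eq_not_of_ne (h.ne_of_cons_cons hrest).symm
    obtain ⟨bs, hbs, hmem, rfl⟩ := altBlocks_of_isUniversal hrest h.of_cons_cons_not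
    refine ⟨[c, !c] :: bs, by simp [hbs], ?_, rfl⟩
    simp only [mem_cons, forall_eq_or_imp]
    exact ⟨by cases c <;> simp [wa, wb], hmem⟩

theorem scatfact_full_balanced_general (k : ℕ) (w : List Bool)
    (hlen : w.length = 2 * k) :
    (∀ v : List Bool, v.length = k → v ∈ ScatFact k w) ↔ AltBlocks k w := by
  simp only [mem_scatFact]
  constructor
  · intro hfull
    exact altBlocks_of_isUniversal hlen fun v hv => (hfull v hv).1
  · rintro ⟨bs, rfl, hbs, rfl⟩ v hv
    exact ⟨isUniversal_flatten (fun b hb => isUniversal_one_of_eq_alt (hbs b hb)) v hv, hv⟩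

theorem scatfact_full_balanced (k : ℕ) (hk : 3 ≤ k) (w : List Bool)
    (hlen : w.length = 2 * k) (ha : w.count wa = k) (hb : w.count wb = k) :
    (∀ v : List Bool, v.length = k → v ∈ ScatFact k w) ↔ AltBlocks k w :=
  scatfact_full_balanced_general k w hlen
end

section
/- For k ≥ 3, the k-spectrum of the word a^{k-1} b^k a has exactly 2k elements; explicitly, it equals { a^r b^s : r+s = k } ∪ { a^i b^{k-1-i} a : 0 ≤ i ≤ k-2 }. -/
/-!
A scattered factor of `a^(k-1) b^k a` is `a^r b^s a^t` with `r ≤ k-1`, `s ≤ k`, `t ≤ 1`. Those of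
length `k` are the `k + 1` words `a^r b^(k-r)` (where `a^k` only arises as `a^(k-1) a`) and the
`k - 1` words `a^i b^(k-1-i) a` with a nonempty `b`-block. Within each family the number of `a`s
determines the word, and the families are disjoint because only the second has an `a` after a `b`.
-/

open List

theorem sublist_replicate_append_replicate_append_replicate_iff {α : Type*} {x y z : α}
    {m n p : ℕ} {u : List α} :
    u <+ replicate m x ++ replicate n y ++ replicate p z ↔
      ∃ r s t, r ≤ m ∧ s ≤ n ∧ t ≤ p ∧ u = replicate r x ++ replicate s y ++ replicate t z := by
  constructor
  · intro h
    obtain ⟨v, w₃, rfl, hv, hw₃⟩ := sublist_append_iff.1 h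
    obtain ⟨w₁, w₂, rfl, hw₁, hw₂⟩ := sublist_append_iff.1 hv
    obtain ⟨r, hr, rfl⟩ := sublist_replicate_iff.1 hw₁
    obtain ⟨s, hs, rfl⟩ := sublist_replicate_iff.1 hw₂
    obtain ⟨t, ht, rfl⟩ := sublist_replicate_iff.1 hw₃
    exact ⟨r, s, t, hr, hs, ht, rfl⟩
  · rintro ⟨r, s, t, hr, hs, ht, rfl⟩
    exact (((replicate_sublist_replicate x).2 hr).append
      ((replicate_sublist_replicate y).2 hs)).append ((replicate_sublist_replicate z).2 ht)

theorem eq_zero_of_replicate_append_replicate_eq_concat {α : Type*} {x y : α} (hxy : x ≠ y)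
    {r s : ℕ} {l : List α} (h : replicate r x ++ replicate s y = l ++ [x]) : s = 0 := by
  by_contra hs
  have := congrArg getLast? h
  simp [getLast?_append, getLast?_replicate, hs, hxy.symm] at this

theorem mem_scatFact_iff {k : ℕ} {w u : List Bool} :
    u ∈ ScatFact k w ↔ u <+ w ∧ u.length = k := by
  simp [ScatFact]

theorem mem_scatFact_balanced_iff {k : ℕ} (hk : 1 ≤ k) {u : List Bool} :
    u ∈ ScatFact k (replicate (k - 1) wa ++ replicate k wb ++ [wa]) ↔
      (∃ r s : ℕ, r + s = k ∧ u = replicate r wa ++ replicate s wb) ∨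
        ∃ i : ℕ, i ≤ k - 2 ∧ u = replicate i wa ++ replicate (k - 1 - i) wb ++ [wa] := by
  have hconcat : replicate (k - 1) wa ++ [wa] = replicate k wa := by
    rw [← replicate_succ', Nat.sub_add_cancel hk]
  rw [mem_scatFact_iff, show replicate (k - 1) wa ++ replicate k wb ++ [wa] =
    replicate (k - 1) wa ++ replicate k wb ++ replicate 1 wa from rfl,
    sublist_replicate_append_replicate_append_replicate_iff]
  constructor
  · rintro ⟨⟨r, s, t, hr, hs, ht, rfl⟩, hlen⟩
    simp only [length_append, length_replicate] at hlen
    obtain rfl | rfl : t = 0 ∨ t = 1 := by omega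
    · exact Or.inl ⟨r, s, by omega, by simp⟩
    obtain rfl | hs₀ := Nat.eq_zero_or_pos s
    · obtain rfl : r = k - 1 := by omega
      exact Or.inl ⟨k, 0, rfl, by simp [hconcat]⟩
    · exact Or.inr ⟨r, by omega, by rw [show k - 1 - r = s by omega, replicate_one]⟩
  · rintro (⟨r, s, hrs, rfl⟩ | ⟨i, hi, rfl⟩)
    · refine ⟨?_, by simp [hrs]⟩
      rcases Nat.lt_or_ge r k with hr | hr
      · exact ⟨r, s, 0, by omega, by omega, by omega, by simp⟩
      · obtain rfl : s = 0 := by omega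
        refine ⟨k - 1, 0, 1, le_rfl, by omega, le_rfl, ?_⟩
        simp [show r = k by omega, ← hconcat]
    · exact ⟨⟨i, k - 1 - i, 1, by omega, by omega, le_rfl, rfl⟩, by simp; omega⟩

theorem scatFact_balanced_eq_union {k : ℕ} (hk : 2 ≤ k) :
    ScatFact k (replicate (k - 1) wa ++ replicate k wb ++ [wa]) =
      (Finset.range (k + 1)).image (fun r => replicate r wa ++ replicate (k - r) wb) ∪
        (Finset.range (k - 1)).image
          (fun i => replicate i wa ++ replicate (k - 1 - i) wb ++ [wa]) := by
  ext u
  simp only [mem_scatFact_balanced_iff (by omega : 1 ≤ k), Finset.mem_union, Finset.mem_image,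
    Finset.mem_range]
  constructor
  · rintro (⟨r, s, hrs, rfl⟩ | ⟨i, hi, rfl⟩)
    · exact Or.inl ⟨r, by omega, by rw [show k - r = s by omega]⟩
    · exact Or.inr ⟨i, by omega, rfl⟩
  · rintro (⟨r, hr, rfl⟩ | ⟨i, hi, rfl⟩)
    · exact Or.inl ⟨r, k - r, by omega, rfl⟩
    · exact Or.inr ⟨i, by omega, rfl⟩

theorem card_scatFact_balanced {k : ℕ} (hk : 2 ≤ k) :
    (ScatFact k (replicate (k - 1) wa ++ replicate k wb ++ [wa])).card = 2 * k := by
  have hsorted : Function.Injective fun r => replicate r wa ++ replicate (k - r) wb := by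
    intro r r' h
    simpa [count_replicate, wa, wb] using congrArg (count wa) h
  have hunsorted : Function.Injective
      fun i => replicate i wa ++ replicate (k - 1 - i) wb ++ [wa] := by
    intro i i' h
    simpa [count_replicate, wa, wb] using congrArg (count wa) h
  rw [scatFact_balanced_eq_union hk, Finset.card_union_of_disjoint,
    Finset.card_image_of_injective _ hsorted, Finset.card_image_of_injective _ hunsorted,
    Finset.card_range, Finset.card_range]
  · omega
  simp only [Finset.disjoint_left, Finset.mem_image, Finset.mem_range]
  rintro _ ⟨r, hr, rfl⟩ ⟨i, hi, h⟩
  have hrk : r = k := by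
    have := eq_zero_of_replicate_append_replicate_eq_concat (by decide : wa ≠ wb) h.symm
    omega
  have := congrArg (count wb) h
  simp [count_replicate, wa, wb, hrk] at this
  omega

theorem scatfact_ak1_bk_a (k : ℕ) (hk : 3 ≤ k) :
    (∀ u : List Bool,
      u ∈ ScatFact k (List.replicate (k - 1) wa ++ List.replicate k wb ++ [wa]) ↔
        ((∃ r s : ℕ, r + s = k ∧ u = List.replicate r wa ++ List.replicate s wb) ∨
         (∃ i : ℕ, i ≤ k - 2 ∧
            u = List.replicate i wa ++ List.replicate (k - 1 - i) wb ++ [wa]))) ∧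
    (ScatFact k (List.replicate (k - 1) wa ++ List.replicate k wb ++ [wa])).card
      = 2 * k :=
  ⟨fun _ => mem_scatFact_balanced_iff (by omega), card_scatFact_balanced (by omega)⟩
end
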